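/- For all n ≥ 6, B_(n) is βη-equivalent to B_(n+4), where B_(k) is the k-fold flat left application of B. -/
import Mathlib


/-- Untyped lambda terms in de Bruijn representation. -/
inductive Lam where
  | var : Nat → Lam
  | app : Lam → Lam → Lam
  | lam : Lam → Lam
deriving DecidableEq

namespace Lam

/-- Lift (shift by one) all free variables with index ≥ `c`. -/
def lift (c : Nat) : Lam → Lam
  | var n => if n < c then var n else var (n + 1)
  | app a b => app (lift c a) (lift c b)
  | lam a => lam (lift (c + 1) a)

/-- Substitute `s` for the free variable with index `d`. -/
def subst (d : Nat) (s : Lam) : Lam → Lam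
  | var n => if n = d then s else if d < n then var (n - 1) else var n
  | app a b => app (subst d s a) (subst d s b)
  | lam a => lam (subst (d + 1) (lift 0 s) a)

/-- One-step βη-reduction (compatible closure of β and η). -/
inductive Step : Lam → Lam → Prop
  | beta (a b : Lam) : Step (app (lam a) b) (subst 0 b a)
  | eta (a : Lam) : Step (lam (app (lift 0 a) (var 0))) a
  | appL {a a' : Lam} (b : Lam) : Step a a' → Step (app a b) (app a' b)
  | appR (a : Lam) {b b' : Lam} : Step b b' → Step (app a b) (app a b')
  | xi {a a' : Lam} : Step a a' → Step (lam a) (lam a')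

/-- βη-equivalence: the equivalence relation generated by one-step βη-reduction. -/
def BetaEtaEq (a b : Lam) : Prop := Relation.EqvGen Step a b

/-- The B combinator λf.λg.λx. f (g x). -/
def B : Lam := lam (lam (lam (app (var 2) (app (var 1) (var 0)))))

/-- `flat X n` is the (n+1)-fold flat left application, i.e. `X_(n+1)`:
`flat X 0 = X = X_(1)` and `flat X (n+1) = (flat X n) X = X_(n+2)`. -/
def flat (X : Lam) : Nat → Lam
  | 0 => X
  | n + 1 => app (flat X n) X

end Lam

open Lam

namespace Lam

def step? : Lam → Option Lam
  | var _ => none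
  | app (lam a) b => some (subst 0 b a)
  | app (var n) b => (step? b).map (app (var n))
  | app (app a1 a2) b =>
      match step? (app a1 a2) with
      | some a' => some (app a' b)
      | none => (step? b).map (app (app a1 a2))
  | lam a => (step? a).map lam

theorem step?_sound : ∀ a b, step? a = some b → Step a b := by
  intro a
  induction a with
  | var n => intro b h; simp [step?] at h
  | lam a ih =>
      intro b h
      simp only [step?, Option.map_eq_some_iff] at h
      obtain ⟨a', ha, rfl⟩ := h
      exact Step.xi (ih a' ha)
  | app a c iha ihc =>
      intro b h
      cases a with
      | lam a0 =>
          simp only [step?] at h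
          cases h
          exact Step.beta a0 c
      | var n =>
          simp only [step?, Option.map_eq_some_iff] at h
          obtain ⟨c', hc, rfl⟩ := h
          exact Step.appR _ (ihc c' hc)
      | app a1 a2 =>
          simp only [step?] at h
          cases ha : step? (app a1 a2) with
          | some a' =>
              rw [ha] at h
              cases h
              exact Step.appL _ (iha a' ha)
          | none =>
              rw [ha] at h
              simp only [Option.map_eq_some_iff] at h
              obtain ⟨c', hc, rfl⟩ := h
              exact Step.appR _ (ihc c' hc)

def reduces (n : Nat) (a : Lam) : Lam :=
  match n with
  | 0 => a
  | n + 1 =>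
      match h : step? a with
      | some b => reduces n b
      | none => a

theorem betaEtaEq_reduces (n : Nat) (a : Lam) : BetaEtaEq a (reduces n a) := by
  induction n generalizing a with
  | zero => exact Relation.EqvGen.refl a
  | succ n ih =>
      unfold reduces
      cases h : step? a with
      | some b =>
          exact Relation.EqvGen.trans _ _ _
            (Relation.EqvGen.rel _ _ (step?_sound a b h)) (ih b)
      | none => exact Relation.EqvGen.refl a

theorem betaEtaEq_appL {a a' : Lam} (b : Lam) (h : BetaEtaEq a a') :
    BetaEtaEq (app a b) (app a' b) := by
  induction h with
  | rel x y hxy => exact Relation.EqvGen.rel _ _ (Step.appL b hxy)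
  | refl x => exact Relation.EqvGen.refl _
  | symm x y _ ih => exact Relation.EqvGen.symm _ _ ih
  | trans x y z _ _ ih1 ih2 => exact Relation.EqvGen.trans _ _ _ ih1 ih2

end Lam

open Lam

theorem key : BetaEtaEq (flat B 5) (flat B 9) := by
  have h1 := betaEtaEq_reduces 500 (flat B 5)
  have h2 := betaEtaEq_reduces 500 (flat B 9)
  have e : reduces 500 (flat B 5) = reduces 500 (flat B 9) := by decide
  exact Relation.EqvGen.trans _ _ _ h1 (e ▸ Relation.EqvGen.symm _ _ h2)

theorem shift : ∀ k : ℕ, BetaEtaEq (flat B (5 + k)) (flat B (9 + k)) := by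
  intro k
  induction k with
  | zero => exact key
  | succ k ih =>
      have : flat B (5 + (k+1)) = Lam.app (flat B (5+k)) B := rfl
      rw [show 5 + (k+1) = (5+k) + 1 from rfl, show 9 + (k+1) = (9+k) + 1 from rfl]
      exact betaEtaEq_appL B ih

/-- For all n ≥ 6, B_(n) is βη-equivalent to B_(n+4).
Note `flat B (n-1) = B_(n)` and `flat B (n+3) = B_(n+4)`. -/
theorem stmt3 : ∀ n : ℕ, 6 ≤ n → BetaEtaEq (flat B (n - 1)) (flat B (n + 3)) := by
  intro n hn
  obtain ⟨k, rfl⟩ : ∃ k, n = 6 + k := ⟨n - 6, by omega⟩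
  have h := shift k
  have e1 : 6 + k - 1 = 5 + k := by omega
  have e2 : 6 + k + 3 = 9 + k := by omega
  rw [e1, e2]
  exact h
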